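/- Let (u, v, ρ, s) be a C² supersonic solution of the smooth-flow 2D steady full Euler system on U, with flow angle σ, Mach angle A ∈ (0, π/2), α = σ + A, κ = 2/(γ−1), j = c/(γ(γ−1)s), and ω = u_y − vₓ. Then along stream characteristics the vorticity satisfies ∂₀ω = (κω/c) ∂₀c − (2j ∂₊s / c) ∂₀c on U. -/

import Mathlib

open Real

noncomputable section

/-- Partial derivative in the `x` direction. -/
def pdx (f : ℝ × ℝ → ℝ) (p : ℝ × ℝ) : ℝ := fderiv ℝ f p (1, 0)

/-- Partial derivative in the `y` direction. -/
def pdy (f : ℝ × ℝ → ℝ) (p : ℝ × ℝ) : ℝ := fderiv ℝ f p (0, 1)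

/-- Directional derivative along the direction with angle `θ p`. -/
def dd (θ : ℝ × ℝ → ℝ) (f : ℝ × ℝ → ℝ) (p : ℝ × ℝ) : ℝ :=
  Real.cos (θ p) * pdx f p + Real.sin (θ p) * pdy f p

/-- Sound speed `c = √(γ s ρ^(γ-1))`. -/
def sound (γ : ℝ) (ρ s : ℝ × ℝ → ℝ) (p : ℝ × ℝ) : ℝ :=
  Real.sqrt (γ * s p * ρ p ^ (γ - 1))

/-- Flow speed `q = √(u² + v²)`. -/
def speed (u v : ℝ × ℝ → ℝ) (p : ℝ × ℝ) : ℝ :=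
  Real.sqrt (u p ^ 2 + v p ^ 2)

/-- Vorticity `ω = u_y − vₓ`. -/
def vort (u v : ℝ × ℝ → ℝ) (p : ℝ × ℝ) : ℝ := pdy u p - pdx v p

/-- `j = c/(γ(γ−1)s)`. -/
def jay (γ : ℝ) (ρ s : ℝ × ℝ → ℝ) (p : ℝ × ℝ) : ℝ :=
  sound γ ρ s p / (γ * (γ - 1) * s p)

/-!
Taking the curl of the momentum equations gives the vorticity transport equation
`q ∂₀ω + ω (uₓ + v_y) + ρ^(γ-2) (ρₓ s_y - ρ_y sₓ) = 0`, the last term being the baroclinic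
term of the polytropic pressure `p = s ρ^γ`. The mass equation turns `ω (uₓ + v_y)` into
`-ω q ∂₀ρ / ρ`. Since `s` is constant along streamlines, `∇s` is normal to the flow, so the
baroclinic cross product is `∂₀ρ ∂ₙs` and `∂₊s = sin A ∂ₙs = (c/q) ∂ₙs`. Finally, differentiating
`c² = γ s ρ^(γ-1)` along the streamline gives `∂₀ρ / ρ = κ ∂₀c / c`.
-/

open Filter Topology

section PartialDerivatives

variable {f g : ℝ × ℝ → ℝ} {p : ℝ × ℝ}

lemma pdx_add (hf : DifferentiableAt ℝ f p) (hg : DifferentiableAt ℝ g p) :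
    pdx (fun q => f q + g q) p = pdx f p + pdx g p := by
  simp [pdx, fderiv_fun_add hf hg]

lemma pdy_add (hf : DifferentiableAt ℝ f p) (hg : DifferentiableAt ℝ g p) :
    pdy (fun q => f q + g q) p = pdy f p + pdy g p := by
  simp [pdy, fderiv_fun_add hf hg]

lemma pdx_sub (hf : DifferentiableAt ℝ f p) (hg : DifferentiableAt ℝ g p) :
    pdx (fun q => f q - g q) p = pdx f p - pdx g p := by
  simp [pdx, fderiv_fun_sub hf hg]

lemma pdy_sub (hf : DifferentiableAt ℝ f p) (hg : DifferentiableAt ℝ g p) :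
    pdy (fun q => f q - g q) p = pdy f p - pdy g p := by
  simp [pdy, fderiv_fun_sub hf hg]

lemma pdx_mul (hf : DifferentiableAt ℝ f p) (hg : DifferentiableAt ℝ g p) :
    pdx (fun q => f q * g q) p = pdx f p * g p + f p * pdx g p := by
  simp [pdx, fderiv_fun_mul hf hg]
  ring

lemma pdy_mul (hf : DifferentiableAt ℝ f p) (hg : DifferentiableAt ℝ g p) :
    pdy (fun q => f q * g q) p = pdy f p * g p + f p * pdy g p := by
  simp [pdy, fderiv_fun_mul hf hg]
  ring

lemma pdx_eq_zero_of_eventually (h : ∀ᶠ q in 𝓝 p, f q = 0) : pdx f p = 0 := by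
  simp [pdx, Filter.EventuallyEq.fderiv_eq (f := fun _ => (0 : ℝ)) h]

lemma pdy_eq_zero_of_eventually (h : ∀ᶠ q in 𝓝 p, f q = 0) : pdy f p = 0 := by
  simp [pdy, Filter.EventuallyEq.fderiv_eq (f := fun _ => (0 : ℝ)) h]

lemma ContDiffAt.differentiableAt_fderiv_apply (hf : ContDiffAt ℝ 2 f p) (w : ℝ × ℝ) :
    DifferentiableAt ℝ (fun q => fderiv ℝ f q w) p :=
  ((hf.fderiv_right (m := 1) (by norm_num)).differentiableAt (by norm_num)).clm_apply
    (differentiableAt_const w)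

lemma ContDiffAt.differentiableAt_pdx (hf : ContDiffAt ℝ 2 f p) : DifferentiableAt ℝ (pdx f) p :=
  hf.differentiableAt_fderiv_apply (1, 0)

lemma ContDiffAt.differentiableAt_pdy (hf : ContDiffAt ℝ 2 f p) : DifferentiableAt ℝ (pdy f) p :=
  hf.differentiableAt_fderiv_apply (0, 1)

lemma ContDiffAt.fderiv_fderiv_apply (hf : ContDiffAt ℝ 2 f p) (v w : ℝ × ℝ) :
    fderiv ℝ (fun q => fderiv ℝ f q w) p v = fderiv ℝ (fderiv ℝ f) p v w := by
  rw [fderiv_clm_apply ((hf.fderiv_right (m := 1) (by norm_num)).differentiableAt (by norm_num))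
    (differentiableAt_const w)]
  simp

lemma ContDiffAt.pdx_pdy_comm (hf : ContDiffAt ℝ 2 f p) : pdx (pdy f) p = pdy (pdx f) p := by
  change fderiv ℝ (fun q => fderiv ℝ f q (0, 1)) p (1, 0) =
    fderiv ℝ (fun q => fderiv ℝ f q (1, 0)) p (0, 1)
  rw [hf.fderiv_fderiv_apply, hf.fderiv_fderiv_apply,
    (hf.isSymmSndFDerivAt (by simp)).eq]

end PartialDerivatives

lemma dd_eq_fderiv_apply (θ f : ℝ × ℝ → ℝ) (p : ℝ × ℝ) :
    dd θ f p = fderiv ℝ f p (cos (θ p), sin (θ p)) := by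
  have : ((cos (θ p), sin (θ p)) : ℝ × ℝ) = cos (θ p) • (1, 0) + sin (θ p) • (0, 1) := by
    ext <;> simp
  rw [this, map_add, map_smul, map_smul]
  rfl

lemma mul_pdx_add_mul_pdy_eq_mul_dd {θ : ℝ × ℝ → ℝ} {p : ℝ × ℝ} {a b q : ℝ}
    (ha : a = q * cos (θ p)) (hb : b = q * sin (θ p)) (f : ℝ × ℝ → ℝ) :
    a * pdx f p + b * pdy f p = q * dd θ f p := by
  rw [ha, hb, dd]
  ring

lemma dd_add_angle (θ A f : ℝ × ℝ → ℝ) (p : ℝ × ℝ) :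
    dd (fun r => θ r + A r) f p =
      cos (A p) * dd θ f p + sin (A p) * dd (fun r => θ r + π / 2) f p := by
  simp only [dd, cos_add, sin_add, cos_pi_div_two, sin_pi_div_two]
  ring

lemma pdx_mul_pdy_sub_pdy_mul_pdx (θ f g : ℝ × ℝ → ℝ) (p : ℝ × ℝ) :
    pdx f p * pdy g p - pdy f p * pdx g p =
      dd θ f p * dd (fun r => θ r + π / 2) g p - dd (fun r => θ r + π / 2) f p * dd θ g p := by
  simp only [dd, cos_add_pi_div_two, sin_add_pi_div_two]
  linear_combination (pdy f p * pdx g p - pdx f p * pdy g p) * sin_sq_add_cos_sq (θ p)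

theorem vort_transport {u v τ P : ℝ × ℝ → ℝ} {p : ℝ × ℝ}
    (hu : ContDiffAt ℝ 2 u p) (hv : ContDiffAt ℝ 2 v p) (hτ : DifferentiableAt ℝ τ p)
    (hP : ContDiffAt ℝ 2 P p)
    (hmomx : ∀ᶠ q in 𝓝 p, u q * pdx u q + v q * pdy u q + τ q * pdx P q = 0)
    (hmomy : ∀ᶠ q in 𝓝 p, u q * pdx v q + v q * pdy v q + τ q * pdy P q = 0) :
    u p * pdx (vort u v) p + v p * pdy (vort u v) p + vort u v p * (pdx u p + pdy v p) +
      (pdy τ p * pdx P p - pdx τ p * pdy P p) = 0 := by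
  have du := hu.differentiableAt two_ne_zero
  have dv := hv.differentiableAt two_ne_zero
  have dux := hu.differentiableAt_pdx
  have duy := hu.differentiableAt_pdy
  have dvx := hv.differentiableAt_pdx
  have dvy := hv.differentiableAt_pdy
  have dPx := hP.differentiableAt_pdx
  have dPy := hP.differentiableAt_pdy
  -- `∂_y` of the first momentum equation minus `∂_x` of the second; the third-order terms
  -- cancel by the symmetry of mixed partials.
  have hy := pdy_eq_zero_of_eventually hmomx
  have hx := pdx_eq_zero_of_eventually hmomy
  rw [pdy_add (by fun_prop) (by fun_prop), pdy_add (by fun_prop) (by fun_prop),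
    pdy_mul du dux, pdy_mul dv duy, pdy_mul hτ dPx] at hy
  rw [pdx_add (by fun_prop) (by fun_prop), pdx_add (by fun_prop) (by fun_prop),
    pdx_mul du dvx, pdx_mul dv dvy, pdx_mul hτ dPy] at hx
  have hvort : vort u v = fun q => pdy u q - pdx v q := rfl
  rw [hvort, pdx_sub duy dvx, pdy_sub duy dvx]
  linear_combination hy - hx + u p * hu.pdx_pdy_comm + v p * hv.pdx_pdy_comm
    + τ p * hP.pdx_pdy_comm

section PolytropicGas

variable {γ : ℝ} {ρ s : ℝ × ℝ → ℝ} {p : ℝ × ℝ}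

lemma fderiv_pressure_apply (hρ : DifferentiableAt ℝ ρ p) (hs : DifferentiableAt ℝ s p)
    (hρp : ρ p ≠ 0) (w : ℝ × ℝ) :
    fderiv ℝ (fun q => s q * ρ q ^ γ) p w =
      ρ p ^ γ * fderiv ℝ s p w + γ * s p * ρ p ^ (γ - 1) * fderiv ℝ ρ p w := by
  have hP : HasFDerivAt (fun q => s q * ρ q ^ γ) _ p :=
    hs.hasFDerivAt.mul (hρ.hasFDerivAt.rpow_const (p := γ) (Or.inl hρp))
  simp [hP.fderiv]
  ring

lemma fderiv_inv_apply (hρ : DifferentiableAt ℝ ρ p) (hρp : ρ p ≠ 0) (w : ℝ × ℝ) :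
    fderiv ℝ (fun q => (ρ q)⁻¹) p w = -fderiv ℝ ρ p w / ρ p ^ 2 := by
  have hτ : HasFDerivAt (fun q => (ρ q)⁻¹) _ p :=
    (hasDerivAt_inv hρp).comp_hasFDerivAt p hρ.hasFDerivAt
  simp [hτ.fderiv]
  ring

lemma baroclinic_polytropic (hρ : DifferentiableAt ℝ ρ p) (hs : DifferentiableAt ℝ s p)
    (hρp : ρ p ≠ 0) :
    pdy (fun q => (ρ q)⁻¹) p * pdx (fun q => s q * ρ q ^ γ) p -
        pdx (fun q => (ρ q)⁻¹) p * pdy (fun q => s q * ρ q ^ γ) p =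
      ρ p ^ γ / ρ p ^ 2 * (pdx ρ p * pdy s p - pdy ρ p * pdx s p) := by
  simp only [pdx, pdy, fderiv_pressure_apply hρ hs hρp, fderiv_inv_apply hρ hρp]
  ring

lemma sound_sq (hγ : 0 < γ) (hρp : 0 < ρ p) (hsp : 0 < s p) :
    sound γ ρ s p ^ 2 = γ * s p * (ρ p ^ γ / ρ p) := by
  rw [sound, sq_sqrt (by positivity), rpow_sub_one hρp.ne']

lemma dd_sound (θ : ℝ × ℝ → ℝ) (hρ : DifferentiableAt ℝ ρ p) (hs : DifferentiableAt ℝ s p)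
    (hγ : 0 < γ) (hρp : 0 < ρ p) (hsp : 0 < s p) :
    dd θ (sound γ ρ s) p =
      sound γ ρ s p / 2 * (dd θ s p / s p + (γ - 1) * dd θ ρ p / ρ p) := by
  have hE : 0 < γ * s p * ρ p ^ (γ - 1) := by positivity
  have hc : HasFDerivAt (sound γ ρ s) _ p :=
    ((hs.hasFDerivAt.const_mul γ).mul
      (hρ.hasFDerivAt.rpow_const (p := γ - 1) (Or.inl hρp.ne'))).sqrt hE.ne'
  have hc2 : √(γ * s p * ρ p ^ (γ - 1)) ^ 2 = γ * s p * ρ p ^ (γ - 1) := sq_sqrt hE.le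
  have hc0 : √(γ * s p * ρ p ^ (γ - 1)) ≠ 0 := (sqrt_pos.2 hE).ne'
  simp only [dd_eq_fderiv_apply θ, hc.fderiv]
  simp [sound, rpow_sub_one hρp.ne' (γ - 1)]
  field_simp
  rw [hc2]
  ring

end PolytropicGas

theorem vort_transport_polytropic {γ : ℝ} {u v ρ s : ℝ × ℝ → ℝ} {p : ℝ × ℝ}
    (hu : ContDiffAt ℝ 2 u p) (hv : ContDiffAt ℝ 2 v p) (hρ : ContDiffAt ℝ 2 ρ p)
    (hs : ContDiffAt ℝ 2 s p) (hρp : ρ p ≠ 0)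
    (hmomx : ∀ᶠ q in 𝓝 p,
      u q * pdx u q + v q * pdy u q + (ρ q)⁻¹ * pdx (fun q => s q * ρ q ^ γ) q = 0)
    (hmomy : ∀ᶠ q in 𝓝 p,
      u q * pdx v q + v q * pdy v q + (ρ q)⁻¹ * pdy (fun q => s q * ρ q ^ γ) q = 0) :
    u p * pdx (vort u v) p + v p * pdy (vort u v) p + vort u v p * (pdx u p + pdy v p) +
      ρ p ^ γ / ρ p ^ 2 * (pdx ρ p * pdy s p - pdy ρ p * pdx s p) = 0 := by
  have dρ := hρ.differentiableAt two_ne_zero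
  rw [← baroclinic_polytropic dρ (hs.differentiableAt two_ne_zero) hρp]
  exact vort_transport (τ := fun q => (ρ q)⁻¹) hu hv (dρ.inv hρp)
    (hs.mul (hρ.rpow_const_of_ne hρp)) hmomx hmomy

lemma streamline_vorticity_identity {γ ρ R s c q ω div Dω Dρ Dc Dns Dps : ℝ}
    (hγ : γ ≠ 0) (hγ1 : γ - 1 ≠ 0) (hρ : ρ ≠ 0) (hs : s ≠ 0) (hc : c ≠ 0) (hq : q ≠ 0)
    (hc2 : c ^ 2 = γ * s * (R / ρ))
    (hdiv : ρ * div + q * Dρ = 0)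
    (htrans : q * Dω + ω * div + R / ρ ^ 2 * (Dρ * Dns) = 0)
    (hsound : Dc = c / 2 * ((γ - 1) * Dρ / ρ))
    (hplus : Dps = c / q * Dns) :
    Dω = 2 / (γ - 1) * ω / c * Dc - 2 * (c / (γ * (γ - 1) * s)) * Dps / c * Dc := by
  have hω : Dω = ω * Dρ / ρ - R / ρ ^ 2 * Dρ * Dns / q := by
    field_simp at htrans ⊢
    linear_combination htrans - ω * ρ * hdiv
  rw [hω, hsound, hplus]
  field_simp
  rw [hc2]
  field_simp

theorem stmt_15_general (γ : ℝ) (hγ : 1 < γ) (U : Set (ℝ × ℝ)) (hU : IsOpen U)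
    (u v ρ s σ A : ℝ × ℝ → ℝ)
    (hu : ContDiffOn ℝ 2 u U) (hv : ContDiffOn ℝ 2 v U)
    (hρ : ContDiffOn ℝ 2 ρ U) (hs : ContDiffOn ℝ 2 s U)
    (hρpos : ∀ p ∈ U, 0 < ρ p) (hspos : ∀ p ∈ U, 0 < s p)
    (hmass : ∀ p ∈ U, pdx (fun q => ρ q * u q) p + pdy (fun q => ρ q * v q) p = 0)
    (hmomx : ∀ p ∈ U,
      u p * pdx u p + v p * pdy u p + (ρ p)⁻¹ * pdx (fun q => s q * ρ q ^ γ) p = 0)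
    (hmomy : ∀ p ∈ U,
      u p * pdx v p + v p * pdy v p + (ρ p)⁻¹ * pdy (fun q => s q * ρ q ^ γ) p = 0)
    (hent : ∀ p ∈ U, u p * pdx s p + v p * pdy s p = 0)
    (hsup : ∀ p ∈ U, (sound γ ρ s p) ^ 2 < u p ^ 2 + v p ^ 2)
    (huσ : ∀ p ∈ U, u p = speed u v p * Real.cos (σ p))
    (hvσ : ∀ p ∈ U, v p = speed u v p * Real.sin (σ p))
    (hsinA : ∀ p ∈ U, Real.sin (A p) = sound γ ρ s p / speed u v p)
    :
    ∀ p ∈ U,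
      dd σ (vort u v) p =
        (2 / (γ - 1)) * vort u v p / sound γ ρ s p * dd σ (sound γ ρ s) p -
        2 * jay γ ρ s p * dd (fun r => σ r + A r) s p / sound γ ρ s p *
          dd σ (sound γ ρ s) p := by
  intro p hp
  have hUp : U ∈ 𝓝 p := hU.mem_nhds hp
  have dρ := (hρ.contDiffAt hUp).differentiableAt two_ne_zero
  have ds := (hs.contDiffAt hUp).differentiableAt two_ne_zero
  have hγ0 : 0 < γ := by linarith
  have hρp := hρpos p hp
  have hsp := hspos p hp
  have hq : 0 < speed u v p := sqrt_pos.2 ((sq_nonneg _).trans_lt (hsup p hp))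
  have hflow := mul_pdx_add_mul_pdy_eq_mul_dd (huσ p hp) (hvσ p hp)
  have hs_stream : dd σ s p = 0 := by
    have h := hent p hp
    rwa [hflow, mul_eq_zero, or_iff_right hq.ne'] at h
  have hdiv : ρ p * (pdx u p + pdy v p) + speed u v p * dd σ ρ p = 0 := by
    have h := hmass p hp
    rw [pdx_mul dρ ((hu.contDiffAt hUp).differentiableAt two_ne_zero),
      pdy_mul dρ ((hv.contDiffAt hUp).differentiableAt two_ne_zero)] at h
    rw [← hflow]
    linear_combination h
  have htrans := vort_transport_polytropic (hu.contDiffAt hUp) (hv.contDiffAt hUp)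
    (hρ.contDiffAt hUp) (hs.contDiffAt hUp) hρp.ne' (eventually_of_mem hUp hmomx)
    (eventually_of_mem hUp hmomy)
  rw [hflow, pdx_mul_pdy_sub_pdy_mul_pdx σ, hs_stream, mul_zero, sub_zero] at htrans
  have hsound := dd_sound σ dρ ds hγ0 hρp hsp
  rw [hs_stream, zero_div, zero_add] at hsound
  have hplus := dd_add_angle σ A s p
  rw [hs_stream, mul_zero, zero_add, hsinA p hp] at hplus
  exact streamline_vorticity_identity hγ0.ne' (by linarith) hρp.ne' hsp.ne'
    (sqrt_pos.2 (by positivity)).ne' hq.ne' (sound_sq hγ0 hρp hsp) hdiv htrans hsound hplus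

/-- along stream characteristics the vorticity satisfies
`∂₀ω = (κω/c) ∂₀c − (2j ∂₊s / c) ∂₀c`, with `κ = 2/(γ−1)`, `j = c/(γ(γ−1)s)`. -/
theorem stmt_15 (γ : ℝ) (hγ : 1 < γ) (U : Set (ℝ × ℝ)) (hU : IsOpen U)
    (u v ρ s σ A : ℝ × ℝ → ℝ)
    (hu : ContDiffOn ℝ 2 u U) (hv : ContDiffOn ℝ 2 v U)
    (hρ : ContDiffOn ℝ 2 ρ U) (hs : ContDiffOn ℝ 2 s U)
    (hσ : ContDiffOn ℝ 1 σ U) (hA : ContDiffOn ℝ 1 A U)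
    (hρpos : ∀ p ∈ U, 0 < ρ p) (hspos : ∀ p ∈ U, 0 < s p)
    (hmass : ∀ p ∈ U, pdx (fun q => ρ q * u q) p + pdy (fun q => ρ q * v q) p = 0)
    (hmomx : ∀ p ∈ U,
      u p * pdx u p + v p * pdy u p + (ρ p)⁻¹ * pdx (fun q => s q * ρ q ^ γ) p = 0)
    (hmomy : ∀ p ∈ U,
      u p * pdx v p + v p * pdy v p + (ρ p)⁻¹ * pdy (fun q => s q * ρ q ^ γ) p = 0)
    (hent : ∀ p ∈ U, u p * pdx s p + v p * pdy s p = 0)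
    (hsup : ∀ p ∈ U, (sound γ ρ s p) ^ 2 < u p ^ 2 + v p ^ 2)
    (huσ : ∀ p ∈ U, u p = speed u v p * Real.cos (σ p))
    (hvσ : ∀ p ∈ U, v p = speed u v p * Real.sin (σ p))
    (hsinA : ∀ p ∈ U, Real.sin (A p) = sound γ ρ s p / speed u v p)
    (hA0 : ∀ p ∈ U, 0 < A p) (hA2 : ∀ p ∈ U, A p < Real.pi / 2)
    :
    ∀ p ∈ U,
      dd σ (vort u v) p =
        (2 / (γ - 1)) * vort u v p / sound γ ρ s p * dd σ (sound γ ρ s) p -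
        2 * jay γ ρ s p * dd (fun r => σ r + A r) s p / sound γ ρ s p *
          dd σ (sound γ ρ s) p :=
  stmt_15_general γ hγ U hU u v ρ s σ A hu hv hρ hs hρpos hspos hmass hmomx hmomy hent hsup huσ hvσ
    hsinA

end
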